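/- Suppose f belongs to the class of structured problems in the special case L(·) ≡ L > 0 and δ(·) ≡ δ ≥ 0. Then any sequence {(z_{k−1}, x_k, x̂_k)}_{k≥0} generated by the fast gradient method with parameters λ_k := (k+1)/2 and β_k := L/σ satisfies, for all k ≥ 0, f(x̂_k) − f(x*) ≤ 4 L l_d(z_k; x*)/(σ(k+1)(k+2)) + ((k+3)/3) δ, and for all k ≥ −1 the points z_k, x_{k+1}, x̂_k lie in the set { x ∈ Q : ‖x − x*‖² ≤ 2 d(x*)/σ + (δ/(6L))(k+1)(k+2)(k+3) }. -/

import Mathlib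

/-!
Indices follow the Lean statement, where `z n` and `β n` are the paper's `z_{n-1}` and `β_{n-1}`.
Write `S_k = λ_0 + ⋯ + λ_k`.

Everything rests on the estimate-sequence invariant `S_k f(x̂_k) - (S_0 + ⋯ + S_k) δ ≤ min ψ_{k+1}`.
The points `x̂_{k+1}` and `x_{k+1}` are the same convex combination, with weights `S_k / S_{k+1}` and
`λ_{k+1} / S_{k+1}`, of `x̂_k` with `z (k+2)` and with `z (k+1)` respectively. So convexity of
`l_f(x_{k+1}; ·)` and its quadratic upper bound lose only `λ_{k+1}² L / (2 S_{k+1}) ‖z (k+2) - z (k+1)‖²`,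
which the Bregman term of `ψ_{k+2}` pays for as long as `λ_k² L ≤ σ β_k S_k`; for `λ_k = (k+1)/2` and
`β = L/σ` this reads `(k+1)² ≤ (k+1)(k+2)`. Property 1 (iii) bounds `min ψ_{k+1}` by
`S_k f(x*) + β l_d(z (k+1); x*)`, which gives the rate. Since `f(x̂_k) ≥ f(x*)` and
`l_d(z; x*) ≤ d(x*) - σ/2 ‖x* - z‖²`, the same inequality confines `z (k+1)` to a ball around `x*`, and
`x_k`, `x̂_k` follow because balls are convex.
-/

open Finset

namespace FastGradientMethod

variable {E : Type*} [NormedAddCommGroup E] [NormedSpace ℝ E]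

lemma convex_setOf_norm_sub_sq_le (c : E) (r : ℝ) : Convex ℝ {v : E | ‖v - c‖ ^ 2 ≤ r} := by
  rcases lt_or_ge r 0 with hr | hr
  · convert convex_empty (𝕜 := ℝ) (E := E)
    exact Set.eq_empty_of_forall_notMem fun v hv => (hr.trans_le (sq_nonneg _)).not_ge hv
  · convert convex_closedBall c √r using 1
    ext v
    rw [Set.mem_ofPred_eq, Metric.mem_closedBall, dist_eq_norm, Real.le_sqrt (norm_nonneg _) hr]

lemma inv_add_smul_add_smul_eq {a b : ℝ} (ha : a ≠ 0) (hab : a + b ≠ 0) (v w : E) :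
    (a + b)⁻¹ • (v + b • w) = (a / (a + b)) • (a⁻¹ • v) + (b / (a + b)) • w := by
  simp only [smul_add, smul_smul]
  congr 2 <;> field_simp

lemma mem_of_mem_segment_succ {B : ℕ → Set E} (hB : Monotone B) (hBcv : ∀ n, Convex ℝ (B n))
    {p w : ℕ → E} (hp0 : p 0 ∈ B 0) (hw : ∀ k, w k ∈ B (k + 1))
    (hp : ∀ k, p (k + 1) ∈ segment ℝ (p k) (w k)) : ∀ k, p k ∈ B k
  | 0 => hp0
  | k + 1 => (hBcv (k + 1)).segment_subset
      (hB k.le_succ (mem_of_mem_segment_succ hB hBcv hp0 hw hp k)) (hw k) (hp k)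

lemma mul_le_of_convexOn_of_le_add_sq_norm {Q : Set E} {f g : E → ℝ} {L δ a b : ℝ} {y p w w' : E}
    (hg : ConvexOn ℝ Q g) (hub : ∀ u ∈ Q, f u ≤ g u + L / 2 * ‖u - y‖ ^ 2 + δ)
    (hp : p ∈ Q) (hw' : w' ∈ Q) (ha : 0 ≤ a) (hb : 0 ≤ b) (hab : 0 < a + b)
    (hy : y = (a / (a + b)) • p + (b / (a + b)) • w) :
    (a + b) * f ((a / (a + b)) • p + (b / (a + b)) • w')
      ≤ a * g p + b * g w' + L / 2 * (b ^ 2 / (a + b)) * ‖w' - w‖ ^ 2 + (a + b) * δ := by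
  have hconv := (convexOn_iff_div.1 hg).2 hp hw' ha hb hab
  have hdist : ‖(a / (a + b)) • p + (b / (a + b)) • w' - y‖ = b / (a + b) * ‖w' - w‖ := by
    rw [hy, add_sub_add_left_eq_sub, ← smul_sub, norm_smul,
      Real.norm_of_nonneg (div_nonneg hb hab.le)]
  have hup := hub _ (convex_iff_div.1 hg.1 hp hw' ha hb hab)
  rw [hdist] at hup
  simp only [smul_eq_mul] at hconv
  calc (a + b) * f ((a / (a + b)) • p + (b / (a + b)) • w')
      ≤ (a + b) * (a / (a + b) * g p + b / (a + b) * g w'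
          + L / 2 * (b / (a + b) * ‖w' - w‖) ^ 2 + δ) := by gcongr; linarith
    _ = a * g p + b * g w' + L / 2 * (b ^ 2 / (a + b)) * ‖w' - w‖ ^ 2 + (a + b) * δ := by
      field_simp

lemma sq_norm_sub_le_of_isMinOn {Q : Set E} {d : E → ℝ} {d₀ : E →L[ℝ] ℝ} {σ : ℝ} {x₀ u : E}
    (hQ : Convex ℝ Q) (hx₀ : x₀ ∈ Q) (hu : u ∈ Q) (hmin : IsMinOn d Q x₀)
    (hd : HasFDerivWithinAt d d₀ Q x₀)
    (hBreg : σ / 2 * ‖u - x₀‖ ^ 2 ≤ d u - d x₀ - d₀ (u - x₀)) :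
    σ / 2 * ‖u - x₀‖ ^ 2 ≤ d u - d x₀ := by
  have := hmin.localize.hasFDerivWithinAt_nonneg hd
    (sub_mem_posTangentConeAt_of_segment_subset (hQ.segment_subset hx₀ hu))
  linarith

def IsWeightedAverage (lam : ℕ → ℝ) (z xhat : ℕ → E) : Prop :=
  ∀ k, xhat k = (∑ i ∈ range (k + 1), lam i)⁻¹ • ∑ i ∈ range (k + 1), lam i • z (i + 1)

def IsQueryPoint (lam : ℕ → ℝ) (z x : ℕ → E) : Prop :=
  x 0 = z 0 ∧ ∀ k, x (k + 1) = (∑ i ∈ range (k + 2), lam i)⁻¹ •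
    ((∑ i ∈ range (k + 1), lam i • z (i + 1)) + lam (k + 1) • z (k + 1))

variable {lam : ℕ → ℝ} {x z xhat : ℕ → E}

lemma xhat_zero_eq (hlam : ∀ k, 0 < lam k)
    (hmxhat : IsWeightedAverage lam z xhat) :
    xhat 0 = z 1 := by
  rw [hmxhat, sum_range_one, sum_range_one, inv_smul_smul₀ (hlam 0).ne']

lemma xhat_succ_eq (hlam : ∀ k, 0 < lam k)
    (hmxhat : IsWeightedAverage lam z xhat)
    (k : ℕ) :
    xhat (k + 1) =
      ((∑ i ∈ range (k + 1), lam i) / (∑ i ∈ range (k + 1), lam i + lam (k + 1))) • xhat k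
        + (lam (k + 1) / (∑ i ∈ range (k + 1), lam i + lam (k + 1))) • z (k + 2) := by
  have hS := sum_pos (fun i _ => hlam i) (nonempty_range_add_one (n := k))
  rw [hmxhat (k + 1), sum_range_succ lam, sum_range_succ (fun i => lam i • z (i + 1)), hmxhat k]
  exact inv_add_smul_add_smul_eq hS.ne' (add_pos hS (hlam _)).ne' _ _

lemma x_succ_eq (hlam : ∀ k, 0 < lam k)
    (hmx : IsQueryPoint lam z x) (hmxhat : IsWeightedAverage lam z xhat) (k : ℕ) :
    x (k + 1) =
      ((∑ i ∈ range (k + 1), lam i) / (∑ i ∈ range (k + 1), lam i + lam (k + 1))) • xhat k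
        + (lam (k + 1) / (∑ i ∈ range (k + 1), lam i + lam (k + 1))) • z (k + 1) := by
  have hS := sum_pos (fun i _ => hlam i) (nonempty_range_add_one (n := k))
  rw [hmx.2 k, sum_range_succ lam, hmxhat k]
  exact inv_add_smul_add_smul_eq hS.ne' (add_pos hS (hlam _)).ne' _ _

lemma averages_mem {B : ℕ → Set E} (hB : Monotone B) (hBcv : ∀ n, Convex ℝ (B n))
    (hz : ∀ n, z n ∈ B n) (hlam : ∀ k, 0 < lam k)
    (hmx : IsQueryPoint lam z x)
    (hmxhat : IsWeightedAverage lam z xhat) :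
    (∀ k, xhat k ∈ B (k + 1)) ∧ ∀ n, x n ∈ B n := by
  have hseg k (v w : E) (hv : v =
      ((∑ i ∈ range (k + 1), lam i) / (∑ i ∈ range (k + 1), lam i + lam (k + 1))) • xhat k
        + (lam (k + 1) / (∑ i ∈ range (k + 1), lam i + lam (k + 1))) • w) :
      v ∈ segment ℝ (xhat k) w :=
    mem_segment_iff_div.2 ⟨_, _, sum_nonneg fun i _ => (hlam i).le, (hlam _).le,
      add_pos (sum_pos (fun i _ => hlam i) nonempty_range_add_one) (hlam _), hv.symm⟩
  have hxhat := mem_of_mem_segment_succ (B := fun k => B (k + 1)) (fun _ _ h => hB (by omega))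
    (fun _ => hBcv _) (xhat_zero_eq hlam hmxhat ▸ hz 1) (fun k => hz (k + 2))
    fun k => hseg k _ _ (xhat_succ_eq hlam hmxhat k)
  refine ⟨hxhat, fun n => ?_⟩
  cases n with
  | zero => exact hmx.1 ▸ hz 0
  | succ k =>
    exact (hBcv _).segment_subset (hxhat k) (hz (k + 1))
      (hseg k _ _ (x_succ_eq hlam hmx hmxhat k))

variable {Q : Set E} {f : E → ℝ} {lf : E → E → ℝ} {d : E → ℝ} {d' : E → E →L[ℝ] ℝ}
  {ψ : ℕ → E → ℝ} {β : ℕ → ℝ} {σ L δ : ℝ}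

lemma le_psi_succ (hd_nonneg : ∀ u ∈ Q, 0 ≤ d u)
    (hBreg : ∀ w ∈ Q, ∀ u ∈ Q, σ / 2 * ‖u - w‖ ^ 2 ≤ d u - d w - d' w (u - w))
    (hβ : ∀ n, 0 ≤ β n) (hβmono : ∀ n, β n ≤ β (n + 1)) (hzQ : ∀ n, z n ∈ Q)
    (hP2 : ∀ n : ℕ, ∀ u ∈ Q,
      ψ n (z n) + lam n * lf (x n) u + β (n + 1) * d u
        - β n * (d (z n) + d' (z n) (u - z n)) ≤ ψ (n + 1) u) (n : ℕ) (u : E) (hu : u ∈ Q) :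
    ψ n (z n) + lam n * lf (x n) u + β n * σ / 2 * ‖u - z n‖ ^ 2 ≤ ψ (n + 1) u := by
  linarith [hP2 n u hu, mul_le_mul_of_nonneg_left (hBreg _ (hzQ n) u hu) (hβ n),
    mul_le_mul_of_nonneg_right (hβmono n) (hd_nonneg u hu)]

lemma sum_mul_f_xhat_sub_le_psi (hlam : ∀ k, 0 < lam k)
    (hxQ : ∀ k, x k ∈ Q) (hzQ : ∀ n, z n ∈ Q) (hxhatQ : ∀ k, xhat k ∈ Q)
    (hlf_cv : ∀ y ∈ Q, ConvexOn ℝ Q (lf y)) (hlf_lb : ∀ y ∈ Q, ∀ u ∈ Q, lf y u ≤ f u)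
    (hlf_ub : ∀ y ∈ Q, ∀ u ∈ Q, f u ≤ lf y u + L / 2 * ‖u - y‖ ^ 2 + δ)
    (hψ0 : ψ 0 (z 0) = 0)
    (hstep : ∀ n, ∀ u ∈ Q,
      ψ n (z n) + lam n * lf (x n) u + β n * σ / 2 * ‖u - z n‖ ^ 2 ≤ ψ (n + 1) u)
    (hcond : ∀ k, L * lam k ^ 2 ≤ σ * β k * ∑ i ∈ range (k + 1), lam i)
    (hmx : IsQueryPoint lam z x) (hmxhat : IsWeightedAverage lam z xhat) (k : ℕ) :
    (∑ i ∈ range (k + 1), lam i) * f (xhat k)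
      - (∑ i ∈ range (k + 1), ∑ j ∈ range (i + 1), lam j) * δ ≤ ψ (k + 1) (z (k + 1)) := by
  induction k with
  | zero =>
    have hcond0 : L * lam 0 ≤ σ * β 0 := by
      have := hcond 0
      rw [sum_range_one] at this
      nlinarith [hlam 0]
    have hub := hlf_ub _ (hxQ 0) _ (hzQ 1)
    have h0 := hstep 0 _ (hzQ 1)
    rw [hmx.1] at hub h0
    rw [hψ0] at h0
    simp only [zero_add, sum_range_one, xhat_zero_eq hlam hmxhat]
    linarith [mul_le_mul_of_nonneg_left hub (hlam 0).le,
      mul_le_mul_of_nonneg_right hcond0 (sq_nonneg ‖z 1 - z 0‖)]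
  | succ k ih =>
    set S := ∑ i ∈ range (k + 1), lam i
    have hS : 0 < S := sum_pos (fun i _ => hlam i) nonempty_range_add_one
    have hSsucc : ∑ i ∈ range (k + 2), lam i = S + lam (k + 1) := sum_range_succ _ _
    have hmodel := mul_le_of_convexOn_of_le_add_sq_norm (hlf_cv _ (hxQ (k + 1)))
      (hlf_ub _ (hxQ (k + 1))) (hxhatQ k) (hzQ (k + 2)) hS.le (hlam (k + 1)).le
      (add_pos hS (hlam _)) (x_succ_eq hlam hmx hmxhat k)
    rw [← xhat_succ_eq hlam hmxhat k] at hmodel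
    have hquad : L / 2 * (lam (k + 1) ^ 2 / (S + lam (k + 1))) ≤ β (k + 1) * σ / 2 := by
      have := hcond (k + 1)
      rw [hSsucc] at this
      rw [← mul_div_assoc, div_le_iff₀ (add_pos hS (hlam _))]
      nlinarith
    rw [sum_range_succ (fun i => ∑ j ∈ range (i + 1), lam j), hSsucc]
    linarith [hstep (k + 1) _ (hzQ (k + 2)), ih,
      mul_le_mul_of_nonneg_left (hlf_lb _ (hxQ (k + 1)) _ (hxhatQ k)) hS.le,
      mul_le_mul_of_nonneg_right hquad (sq_nonneg ‖z (k + 2) - z (k + 1)‖)]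

theorem gap_and_distance_bounds (hQcv : Convex ℝ Q) (hd_nonneg : ∀ u ∈ Q, 0 ≤ d u)
    (hBreg : ∀ w ∈ Q, ∀ u ∈ Q, σ / 2 * ‖u - w‖ ^ 2 ≤ d u - d w - d' w (u - w))
    (hlam : ∀ k, 0 < lam k) (hβ0 : 0 ≤ β 0) (hβmono : ∀ n, β n ≤ β (n + 1))
    (hxQ : ∀ k, x k ∈ Q) (hzQ : ∀ n, z n ∈ Q)
    (hlf_cv : ∀ y ∈ Q, ConvexOn ℝ Q (lf y)) (hlf_lb : ∀ y ∈ Q, ∀ u ∈ Q, lf y u ≤ f u)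
    (hlf_ub : ∀ y ∈ Q, ∀ u ∈ Q, f u ≤ lf y u + L / 2 * ‖u - y‖ ^ 2 + δ)
    (hψ0 : ψ 0 (z 0) = 0)
    (hP2 : ∀ n : ℕ, ∀ u ∈ Q,
      ψ n (z n) + lam n * lf (x n) u + β (n + 1) * d u
        - β n * (d (z n) + d' (z n) (u - z n)) ≤ ψ (n + 1) u)
    (hP3 : ∀ k : ℕ, ∀ u ∈ Q,
      ψ (k + 1) (z (k + 1)) ≤ (∑ i ∈ range (k + 1), lam i * lf (x i) u)
        + β (k + 1) * (d (z (k + 1)) + d' (z (k + 1)) (u - z (k + 1))))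
    (hcond : ∀ k, L * lam k ^ 2 ≤ σ * β k * ∑ i ∈ range (k + 1), lam i)
    {xs : E} (hxsQ : xs ∈ Q) (hxs_opt : ∀ u ∈ Q, f xs ≤ f u)
    (hmx : IsQueryPoint lam z x) (hmxhat : IsWeightedAverage lam z xhat) :
    (∀ k, xhat k ∈ Q) ∧
    (∀ k, (∑ i ∈ range (k + 1), lam i) * (f (xhat k) - f xs)
      ≤ β (k + 1) * (d (z (k + 1)) + d' (z (k + 1)) (xs - z (k + 1)))
        + (∑ i ∈ range (k + 1), ∑ j ∈ range (i + 1), lam j) * δ) ∧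
    ∀ k, β (k + 1) * σ / 2 * ‖z (k + 1) - xs‖ ^ 2
      ≤ β (k + 1) * d xs + (∑ i ∈ range (k + 1), ∑ j ∈ range (i + 1), lam j) * δ := by
  have hβ n : 0 ≤ β n := hβ0.trans (monotone_nat_of_le_succ hβmono n.zero_le)
  have hxhatQ := (averages_mem (B := fun _ => Q) (fun _ _ _ => le_rfl) (fun _ => hQcv) hzQ hlam
    hmx hmxhat).1
  have hgap k : (∑ i ∈ range (k + 1), lam i) * (f (xhat k) - f xs)
      ≤ β (k + 1) * (d (z (k + 1)) + d' (z (k + 1)) (xs - z (k + 1)))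
        + (∑ i ∈ range (k + 1), ∑ j ∈ range (i + 1), lam j) * δ := by
    have hmodel : ∑ i ∈ range (k + 1), lam i * lf (x i) xs
        ≤ (∑ i ∈ range (k + 1), lam i) * f xs := by
      rw [sum_mul]
      exact sum_le_sum fun i _ => mul_le_mul_of_nonneg_left (hlf_lb _ (hxQ i) _ hxsQ) (hlam i).le
    linarith [hP3 k xs hxsQ, sum_mul_f_xhat_sub_le_psi hlam hxQ hzQ hxhatQ hlf_cv hlf_lb hlf_ub hψ0
      (le_psi_succ hd_nonneg hBreg hβ hβmono hzQ hP2) hcond hmx hmxhat k]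
  refine ⟨hxhatQ, hgap, fun k => ?_⟩
  have hopt := mul_nonneg (sum_nonneg fun i (_ : i ∈ range (k + 1)) => (hlam i).le)
    (sub_nonneg.2 (hxs_opt _ (hxhatQ k)))
  rw [norm_sub_rev]
  linarith [hgap k, mul_le_mul_of_nonneg_left (hBreg _ (hzQ (k + 1)) _ hxsQ) (hβ (k + 1))]

lemma sum_range_cast_add_one_div_two (k : ℕ) :
    ∑ i ∈ range (k + 1), ((i : ℝ) + 1) / 2 = ((k : ℝ) + 1) * ((k : ℝ) + 2) / 4 := by
  induction k with
  | zero => norm_num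
  | succ k ih => rw [sum_range_succ, ih]; push_cast; ring

lemma sum_range_cast_add_one_mul_add_two_div_four (k : ℕ) :
    ∑ i ∈ range (k + 1), ((i : ℝ) + 1) * ((i : ℝ) + 2) / 4
      = ((k : ℝ) + 1) * ((k : ℝ) + 2) * ((k : ℝ) + 3) / 12 := by
  induction k with
  | zero => norm_num
  | succ k ih => rw [sum_range_succ, ih]; push_cast; ring

lemma le_rate_of_mul_le {g D L σ δ : ℝ} (k : ℕ) (hσ : 0 < σ)
    (h : ((k : ℝ) + 1) * ((k : ℝ) + 2) / 4 * g
      ≤ L / σ * D + ((k : ℝ) + 1) * ((k : ℝ) + 2) * ((k : ℝ) + 3) / 12 * δ) :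
    g ≤ 4 * L * D / (σ * ((k : ℝ) + 1) * ((k : ℝ) + 2)) + ((k : ℝ) + 3) / 3 * δ := by
  calc g ≤ (L / σ * D + ((k : ℝ) + 1) * ((k : ℝ) + 2) * ((k : ℝ) + 3) / 12 * δ)
        / (((k : ℝ) + 1) * ((k : ℝ) + 2) / 4) := by rwa [le_div_iff₀' (by positivity)]
    _ = _ := by field_simp; ring

lemma le_radius_of_mul_le {N D L σ δ P : ℝ} (hσ : 0 < σ) (hL : 0 < L)
    (h : L / σ * σ / 2 * N ≤ L / σ * D + P / 12 * δ) : N ≤ 2 * D / σ + δ / (6 * L) * P := by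
  rw [div_mul_cancel₀ _ hσ.ne'] at h
  calc N ≤ (L / σ * D + P / 12 * δ) / (L / 2) := by rwa [le_div_iff₀' (by positivity)]
    _ = _ := by field_simp; ring

end FastGradientMethod

open FastGradientMethod

theorem fast_gradient_method_constant_parameters_general
    {E : Type*} [NormedAddCommGroup E] [NormedSpace ℝ E]
    (Q : Set E) (hQcv : Convex ℝ Q)
    (f : E → ℝ)
    (σ : ℝ) (hσ : 0 < σ)
    (d : E → ℝ) (d' : E → E →L[ℝ] ℝ)
    (hd_diff : ∀ y ∈ Q, HasFDerivWithinAt d (d' y) Q y)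
    (x₀ : E) (hx₀Q : x₀ ∈ Q) (hdx₀ : d x₀ = 0) (hd_nonneg : ∀ u ∈ Q, 0 ≤ d u)
    (hBreg : ∀ w ∈ Q, ∀ u ∈ Q, σ / 2 * ‖u - w‖ ^ 2 ≤ d u - d w - d' w (u - w))
    (lam : ℕ → ℝ) (hlam : ∀ k, 0 < lam k)
    (β : ℕ → ℝ) (hβ0 : 0 < β 0) (hβmono : ∀ k, β k ≤ β (k + 1))
    (x : ℕ → E) (hxQ : ∀ k, x k ∈ Q)
    (ψ : ℕ → E → ℝ) (z : ℕ → E)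
    (hzQ : ∀ n, z n ∈ Q)
    (lf : E → E → ℝ) (Lc δc : ℝ) (hLc : 0 < Lc) (hδc : 0 ≤ δc)
    (hlf_cv : ∀ y ∈ Q, ConvexOn ℝ Q (lf y))
    (hlf_lb : ∀ y ∈ Q, ∀ u ∈ Q, lf y u ≤ f u)
    (hlf_ub : ∀ y ∈ Q, ∀ u ∈ Q, f u ≤ lf y u + Lc / 2 * ‖u - y‖ ^ 2 + δc)
    (hP1a : ψ 0 (z 0) = 0) (hP1b : z 0 = x₀)
    (hP2 : ∀ n : ℕ, ∀ u ∈ Q,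
      ψ n (z n) + lam n * lf (x n) u + β (n + 1) * d u
        - β n * (d (z n) + d' (z n) (u - z n)) ≤ ψ (n + 1) u)
    (hP3 : ∀ k : ℕ, ∀ u ∈ Q,
      ψ (k + 1) (z (k + 1)) ≤ (∑ i ∈ Finset.range (k + 1), lam i * lf (x i) u)
        + β (k + 1) * (d (z (k + 1)) + d' (z (k + 1)) (u - z (k + 1))))
    (xs : E) (hxsQ : xs ∈ Q) (hxs_opt : ∀ u ∈ Q, f xs ≤ f u)
    (xhat : ℕ → E)
    (hlamk : ∀ k : ℕ, lam k = ((k : ℝ) + 1) / 2) (hβL : ∀ n, β n = Lc / σ)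
    (hmx0 : x 0 = z 0)
    (hmx : ∀ k : ℕ, x (k + 1) = (∑ i ∈ Finset.range (k + 2), lam i)⁻¹ •
        ((∑ i ∈ Finset.range (k + 1), lam i • z (i + 1)) + lam (k + 1) • z (k + 1)))
    (hmxhat : ∀ k, xhat k = (∑ i ∈ Finset.range (k + 1), lam i)⁻¹ • ∑ i ∈ Finset.range (k + 1), lam i • z (i + 1)) :
    (∀ k : ℕ,
      f (xhat k) - f xs ≤
        4 * Lc * (d (z (k + 1)) + d' (z (k + 1)) (xs - z (k + 1)))
          / (σ * ((k : ℝ) + 1) * ((k : ℝ) + 2)) + ((k : ℝ) + 3) / 3 * δc)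
    ∧ (∀ n : ℕ,
      (z n ∈ Q ∧ ‖z n - xs‖ ^ 2 ≤
        2 * d xs / σ + δc / (6 * Lc) * ((n : ℝ) * ((n : ℝ) + 1) * ((n : ℝ) + 2))) ∧
      (x n ∈ Q ∧ ‖x n - xs‖ ^ 2 ≤
        2 * d xs / σ + δc / (6 * Lc) * ((n : ℝ) * ((n : ℝ) + 1) * ((n : ℝ) + 2))))
    ∧ (∀ k : ℕ,
      xhat k ∈ Q ∧ ‖xhat k - xs‖ ^ 2 ≤
        2 * d xs / σ + δc / (6 * Lc) * (((k : ℝ) + 1) * ((k : ℝ) + 2) * ((k : ℝ) + 3))) := by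
  have hS k : ∑ i ∈ range (k + 1), lam i = ((k : ℝ) + 1) * ((k : ℝ) + 2) / 4 := by
    simp only [hlamk, sum_range_cast_add_one_div_two]
  have hC k : ∑ i ∈ range (k + 1), ∑ j ∈ range (i + 1), lam j
      = ((k : ℝ) + 1) * ((k : ℝ) + 2) * ((k : ℝ) + 3) / 12 := by
    simp only [hS, sum_range_cast_add_one_mul_add_two_div_four]
  have hcond k : Lc * lam k ^ 2 ≤ σ * β k * ∑ i ∈ range (k + 1), lam i := by
    rw [hS, hlamk, hβL, mul_div_cancel₀ _ hσ.ne']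
    nlinarith [k.cast_nonneg (α := ℝ)]
  obtain ⟨hxhatQ, hgap, hzball⟩ := gap_and_distance_bounds hQcv hd_nonneg hBreg hlam hβ0.le
    hβmono hxQ hzQ hlf_cv hlf_lb hlf_ub hP1a hP2 hP3 hcond hxsQ hxs_opt ⟨hmx0, hmx⟩ hmxhat
  set R : ℕ → ℝ := fun n => 2 * d xs / σ + δc / (6 * Lc) * ((n : ℝ) * ((n : ℝ) + 1) * ((n : ℝ) + 2))
  have hz : ∀ n, ‖z n - xs‖ ^ 2 ≤ R n
    | 0 => by
      have := sq_norm_sub_le_of_isMinOn hQcv hx₀Q hxsQ (fun u hu => hdx₀ ▸ hd_nonneg u hu)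
        (hd_diff x₀ hx₀Q) (hBreg x₀ hx₀Q xs hxsQ)
      simp only [R, CharP.cast_eq_zero, zero_mul, mul_zero, add_zero]
      rw [hP1b, norm_sub_rev, le_div_iff₀ hσ]
      linarith
    | k + 1 => by
      have := hzball k
      rw [hβL, hC] at this
      convert le_radius_of_mul_le hσ hLc this using 3
      push_cast
      ring
  have hR : Monotone R := fun m n h => by dsimp only [R]; gcongr
  obtain ⟨hxhatR, hxR⟩ := averages_mem (B := fun n => {v | ‖v - xs‖ ^ 2 ≤ R n})
    (fun _ _ h => Set.ofPred_subset_ofPred.2 fun _ hv => hv.trans (hR h))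
    (fun n => convex_setOf_norm_sub_sq_le xs (R n)) hz hlam ⟨hmx0, hmx⟩ hmxhat
  refine ⟨fun k => ?_, fun n => ⟨⟨hzQ n, hz n⟩, hxQ n, hxR n⟩, fun k => ⟨hxhatQ k, ?_⟩⟩
  · have := hgap k
    rw [hS, hC, hβL] at this
    exact le_rate_of_mul_le k hσ this
  · have h : ‖xhat k - xs‖ ^ 2 ≤ R (k + 1) := hxhatR k
    convert h using 3
    push_cast
    ring

/-- Corollary 5.2 (b): the fast gradient method with `λ_k = (k+1)/2`, `β_k = L/σ` for
structured problems with constant `L(·) ≡ L`, `δ(·) ≡ δ`: rate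
`4L l_d(z_k;x*)/(σ(k+1)(k+2)) + (k+3)δ/3` and boundedness of the iterates.
(Indices shifted: `z n`, `β n` stand for the paper's `z_{n-1}`, `β_{n-1}`.) -/
theorem fast_gradient_method_constant_parameters
    {E : Type*} [NormedAddCommGroup E] [NormedSpace ℝ E] [FiniteDimensional ℝ E]
    (Q : Set E) (hQne : Q.Nonempty) (hQcl : IsClosed Q) (hQcv : Convex ℝ Q)
    (f : E → ℝ) (hf_cv : ConvexOn ℝ Q f) (hf_lsc : LowerSemicontinuousOn f Q)
    (σ : ℝ) (hσ : 0 < σ)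
    (d : E → ℝ) (d' : E → E →L[ℝ] ℝ)
    (hd_sc : StrongConvexOn Q σ d)
    (hd_diff : ∀ y ∈ Q, HasFDerivWithinAt d (d' y) Q y)
    (x₀ : E) (hx₀Q : x₀ ∈ Q) (hdx₀ : d x₀ = 0) (hd_nonneg : ∀ u ∈ Q, 0 ≤ d u)
    (hBreg : ∀ w ∈ Q, ∀ u ∈ Q, σ / 2 * ‖u - w‖ ^ 2 ≤ d u - d w - d' w (u - w))
    (lam : ℕ → ℝ) (hlam : ∀ k, 0 < lam k)
    (β : ℕ → ℝ) (hβ0 : 0 < β 0) (hβmono : ∀ k, β k ≤ β (k + 1))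
    (x : ℕ → E) (hxQ : ∀ k, x k ∈ Q)
    (ψ : ℕ → E → ℝ) (z : ℕ → E)
    (hzQ : ∀ n, z n ∈ Q) (hzmin : ∀ n, ∀ u ∈ Q, ψ n (z n) ≤ ψ n u)
    (lf : E → E → ℝ) (Lc δc : ℝ) (hLc : 0 < Lc) (hδc : 0 ≤ δc)
    (hlf_cv : ∀ y ∈ Q, ConvexOn ℝ Q (lf y))
    (hlf_lsc : ∀ y ∈ Q, LowerSemicontinuousOn (lf y) Q)
    (hlf_lb : ∀ y ∈ Q, ∀ u ∈ Q, lf y u ≤ f u)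
    (hlf_ub : ∀ y ∈ Q, ∀ u ∈ Q, f u ≤ lf y u + Lc / 2 * ‖u - y‖ ^ 2 + δc)
    (hP1a : ψ 0 (z 0) = 0) (hP1b : z 0 = x₀)
    (hP2 : ∀ n : ℕ, ∀ u ∈ Q,
      ψ n (z n) + lam n * lf (x n) u + β (n + 1) * d u
        - β n * (d (z n) + d' (z n) (u - z n)) ≤ ψ (n + 1) u)
    (hP3 : ∀ k : ℕ, ∀ u ∈ Q,
      ψ (k + 1) (z (k + 1)) ≤ (∑ i ∈ Finset.range (k + 1), lam i * lf (x i) u)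
        + β (k + 1) * (d (z (k + 1)) + d' (z (k + 1)) (u - z (k + 1))))
    (xs : E) (hxsQ : xs ∈ Q) (hxs_opt : ∀ u ∈ Q, f xs ≤ f u)
    (xhat : ℕ → E)
    (hlamk : ∀ k : ℕ, lam k = ((k : ℝ) + 1) / 2) (hβL : ∀ n, β n = Lc / σ)
    (hmx0 : x 0 = z 0)
    (hmx : ∀ k : ℕ, x (k + 1) = (∑ i ∈ Finset.range (k + 2), lam i)⁻¹ •
        ((∑ i ∈ Finset.range (k + 1), lam i • z (i + 1)) + lam (k + 1) • z (k + 1)))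
    (hmxhat : ∀ k, xhat k = (∑ i ∈ Finset.range (k + 1), lam i)⁻¹ • ∑ i ∈ Finset.range (k + 1), lam i • z (i + 1)) :
    (∀ k : ℕ,
      f (xhat k) - f xs ≤
        4 * Lc * (d (z (k + 1)) + d' (z (k + 1)) (xs - z (k + 1)))
          / (σ * ((k : ℝ) + 1) * ((k : ℝ) + 2)) + ((k : ℝ) + 3) / 3 * δc)
    ∧ (∀ n : ℕ,
      (z n ∈ Q ∧ ‖z n - xs‖ ^ 2 ≤
        2 * d xs / σ + δc / (6 * Lc) * ((n : ℝ) * ((n : ℝ) + 1) * ((n : ℝ) + 2))) ∧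
      (x n ∈ Q ∧ ‖x n - xs‖ ^ 2 ≤
        2 * d xs / σ + δc / (6 * Lc) * ((n : ℝ) * ((n : ℝ) + 1) * ((n : ℝ) + 2))))
    ∧ (∀ k : ℕ,
      xhat k ∈ Q ∧ ‖xhat k - xs‖ ^ 2 ≤
        2 * d xs / σ + δc / (6 * Lc) * (((k : ℝ) + 1) * ((k : ℝ) + 2) * ((k : ℝ) + 3))) :=
  fast_gradient_method_constant_parameters_general Q hQcv f σ hσ d d' hd_diff x₀ hx₀Q hdx₀ hd_nonneg
    hBreg lam hlam β hβ0 hβmono x hxQ ψ z hzQ lf Lc δc hLc hδc hlf_cv hlf_lb hlf_ub hP1a hP1b hP2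
    hP3 xs hxsQ hxs_opt xhat hlamk hβL hmx0 hmx hmxhat
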